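/- arXiv:1610.00313 — 2 statements merged into one kernel-verified Lean document; each statement's English description precedes it below -/
import Mathlib

section
/- Let R ⊆ List (ℕ × Bool) be a recursively enumerable set of words. Then the set of words {w ∈ List (ℕ × Bool) | the element of PresentedGroup (FreeGroup.mk '' R) represented by w is the identity} is recursively enumerable. -/
/-- The `X`-torsion of a group `G`: elements `g` with `g ^ n = 1` for some `n ∈ X`. -/
def xTorsion (X : Set ℕ) (G : Type*) [Group G] : Set G := {g | ∃ n ∈ X, g ^ n = 1}

/-- A group is `X`-torsion-free if its `X`-torsion consists only of the identity. -/
def IsXTorsionFree (X : Set ℕ) (G : Type*) [Group G] : Prop := xTorsion X G = {1}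

/-- The set of orders (≥ 2) of torsion elements of `G`. -/
def torord (G : Type*) [Group G] : Set ℕ := {n | 2 ≤ n ∧ ∃ g : G, orderOf g = n}

/-- One step of the `X`-torsion annihilation: the normal closure of the set of elements
whose image in `G ⧸ N` is `X`-torsion (i.e. `g ^ n ∈ N` for some `n ∈ X`). -/
def torStep (X : Set ℕ) {G : Type*} [Group G] (N : Subgroup G) : Subgroup G :=
  Subgroup.normalClosure {g : G | ∃ n ∈ X, g ^ n ∈ N}

/-- `torX X G n` is `tor^X_n(G)`. -/
def torX (X : Set ℕ) (G : Type*) [Group G] : ℕ → Subgroup G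
  | 0 => ⊥
  | n + 1 => torStep X (torX X G n)

lemma torStep_mono (X : Set ℕ) {G : Type*} [Group G] {N M : Subgroup G} (h : N ≤ M) :
    torStep X N ≤ torStep X M :=
  Subgroup.normalClosure_mono (fun g hg => by
    obtain ⟨n, hn, hgn⟩ := hg; exact ⟨n, hn, h hgn⟩)

lemma torX_le_succ (X : Set ℕ) (G : Type*) [Group G] (n : ℕ) :
    torX X G n ≤ torX X G (n + 1) := by
  induction n with
  | zero => exact bot_le
  | succ n ih => exact torStep_mono X ih

lemma torX_mono (X : Set ℕ) (G : Type*) [Group G] : Monotone (torX X G) :=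
  monotone_nat_of_le_succ (torX_le_succ X G)

/-- `tor^X_ω(G) = ⋃_n tor^X_n(G)`, as a subgroup of `G`. -/
def torOmega (X : Set ℕ) (G : Type*) [Group G] : Subgroup G where
  carrier := ⋃ n, (torX X G n : Set G)
  one_mem' := Set.mem_iUnion.mpr ⟨0, Subgroup.one_mem _⟩
  mul_mem' := by
    intro a b ha hb
    obtain ⟨m, hm⟩ := Set.mem_iUnion.mp ha
    obtain ⟨n, hn⟩ := Set.mem_iUnion.mp hb
    exact Set.mem_iUnion.mpr ⟨max m n, Subgroup.mul_mem _
      (torX_mono X G (le_max_left m n) hm) (torX_mono X G (le_max_right m n) hn)⟩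
  inv_mem' := by
    intro a ha
    obtain ⟨m, hm⟩ := Set.mem_iUnion.mp ha
    exact Set.mem_iUnion.mpr ⟨m, Subgroup.inv_mem _ hm⟩

instance torX_normal (X : Set ℕ) (G : Type*) [Group G] (n : ℕ) : (torX X G n).Normal := by
  cases n with
  | zero => exact inferInstanceAs (⊥ : Subgroup G).Normal
  | succ n => exact inferInstanceAs (Subgroup.normalClosure _).Normal

instance torOmega_normal (X : Set ℕ) (G : Type*) [Group G] : (torOmega X G).Normal := by
  constructor
  intro a ha g
  obtain ⟨m, hm⟩ := Set.mem_iUnion.mp ha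
  exact Set.mem_iUnion.mpr ⟨m, (torX_normal X G m).conj_mem a hm g⟩

/-- A predicate on a primcodable type is recursively enumerable if it is the domain of a
partial computable function. -/
def REPredicate {α : Type*} [Primcodable α] (p : α → Prop) : Prop :=
  Partrec (fun a => Part.assert (p a) (fun _ => Part.some ()))

/-- A group is finitely presented if it is isomorphic to the group of a finite presentation. -/
def IsFinitelyPresented (G : Type*) [Group G] : Prop :=
  ∃ (n : ℕ) (rels : Set (FreeGroup (Fin n))), rels.Finite ∧ Nonempty (G ≃* PresentedGroup rels)

/-! A word `w` is trivial in `⟨ℕ | R⟩` iff it is freely equal to a product of conjugates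
`c r^{±1} c⁻¹` of relators `r ∈ R`. Free equality of words is decidable by comparing reduced
words, and `r ∈ R` is semi-decidable, so searching simultaneously over all such certificates and
all running times of an enumeration of `R` halts exactly on the trivial words. -/

open Encodable Nat.Partrec.Code
open Nat.Partrec (Code)

section Computability

variable {α β : Type*} [Primcodable α] [Primcodable β]

theorem PrimrecRel.rePred_exists {q : α → β → Prop} (hq : PrimrecRel q) :
    REPred fun a => ∃ b, q a b := by
  classical
  have hsearch : Primrec₂ fun a n =>
      ((decode n : Option β).map fun b => decide (q a b)).getD false :=
    Primrec.option_getD.comp (Primrec.option_map (Primrec.decode.comp Primrec.snd)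
      (hq.decide.comp (Primrec.fst.comp Primrec.fst) Primrec.snd)) (Primrec.const false)
  refine (Partrec.rfind hsearch.to_comp.partrec₂).dom_re.of_eq fun a => ?_
  simp only [Nat.rfind_dom, PFun.coe_val, Part.mem_some_iff, Part.some_dom, implies_true,
    and_true]
  constructor
  · rintro ⟨n, hn⟩
    cases h : (decode n : Option β) with
    | none => simp [h] at hn
    | some b => exact ⟨b, by simpa [h] using hn⟩
  · rintro ⟨b, hb⟩
    exact ⟨encode b, by simp [hb]⟩

theorem REPred.comp {p : β → Prop} (hp : REPred p) {f : α → β} (hf : Computable f) :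
    REPred fun a => p (f a) :=
  Partrec.comp hp hf

theorem REPred.and {p q : α → Prop} (hp : REPred p) (hq : REPred q) :
    REPred fun a => p a ∧ q a :=
  (Partrec.bind hp (hq.comp Computable.fst).to₂).dom_re.of_eq fun a => by simp [Part.assert]

theorem REPred.exists_code_evaln {p : α → Prop} (hp : REPred p) :
    ∃ c : Code, ∀ a, p a ↔ ∃ k, (evaln k c (encode a)).isSome := by
  obtain ⟨c, hc⟩ := exists_code.1 hp
  refine ⟨c, fun a => ?_⟩
  have hdom : (eval c (encode a)).Dom ↔ p a := by simp [hc, Part.assert, encodek]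
  simp only [← hdom, Part.dom_iff_mem, evaln_complete, Option.isSome_iff_exists, Option.mem_def]
  exact exists_comm

theorem Nat.Partrec.Code.evaln_isSome_mono {c : Code} {k₁ k₂ n : ℕ} (hk : k₁ ≤ k₂)
    (h : (evaln k₁ c n).isSome) : (evaln k₂ c n).isSome := by
  obtain ⟨x, hx⟩ := Option.isSome_iff_exists.1 h
  exact Option.isSome_iff_exists.2 ⟨x, evaln_mono hk hx⟩

theorem primrecRel_evaln_isSome (c : Code) :
    PrimrecRel fun (a : α) (k : ℕ) => (evaln k c (encode a)).isSome := by
  have h : Primrec₂ fun (a : α) (k : ℕ) => (evaln k c (encode a)).isSome :=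
    Primrec.option_isSome.comp (primrec_evaln.comp
      ((Primrec.snd.pair (Primrec.const c)).pair (Primrec.encode.comp Primrec.fst)))
  exact PrimrecRel.comp Primrec.eq h (Primrec.const true)

theorem REPred.exists {q : α × β → Prop} (hq : REPred q) :
    REPred fun a => ∃ b, q (a, b) := by
  obtain ⟨c, hc⟩ := REPred.exists_code_evaln hq
  have hhalts : PrimrecRel fun (a : α) (bk : β × ℕ) =>
      (evaln bk.2 c (encode (a, bk.1))).isSome :=
    (primrecRel_evaln_isSome c).comp (Primrec.fst.pair (Primrec.fst.comp Primrec.snd))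
      (Primrec.snd.comp Primrec.snd)
  exact hhalts.rePred_exists.of_eq fun a => by simp only [hc, Prod.exists]

theorem REPred.forall_mem_list {p : α → Prop} (hp : REPred p) :
    REPred fun L : List α => ∀ a ∈ L, p a := by
  obtain ⟨c, hc⟩ := REPred.exists_code_evaln hp
  refine (primrecRel_evaln_isSome c).forall_mem_list.rePred_exists.of_eq fun L => ?_
  simp only [hc]
  constructor
  · rintro ⟨k, hk⟩ a ha
    exact ⟨k, hk a ha⟩
  · -- `evaln` is monotone in the fuel, so one bound serves every element of `L`.
    intro h
    choose! k hk using h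
    exact ⟨(L.map k).sum, fun a ha =>
      evaln_isSome_mono (List.le_sum_of_mem (List.mem_map_of_mem ha)) (hk a ha)⟩

end Computability

namespace FreeGroup

variable {α : Type*}

/-- `(c, r, b)` encodes the conjugate `c r c⁻¹` if `b`, and `c r⁻¹ c⁻¹` otherwise. -/
def conjWord (e : List (α × Bool) × List (α × Bool) × Bool) : List (α × Bool) :=
  e.1 ++ cond e.2.2 e.2.1 (invRev e.2.1) ++ invRev e.1

theorem mk_conjWord (c r : List (α × Bool)) (b : Bool) :
    mk (conjWord (c, r, b)) = mk c * cond b (mk r) (mk r)⁻¹ * (mk c)⁻¹ := by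
  cases b <;> simp [conjWord, mul_mk, inv_mk]

theorem mk_conjWord_mem_normalClosure {R : Set (List (α × Bool))} {c r : List (α × Bool)}
    (hr : r ∈ R) (b : Bool) : mk (conjWord (c, r, b)) ∈ Subgroup.normalClosure (mk '' R) := by
  have hr' : mk r ∈ Subgroup.normalClosure (mk '' R) :=
    Subgroup.subset_normalClosure (Set.mem_image_of_mem mk hr)
  rw [mk_conjWord]
  refine Subgroup.normalClosure_normal.conj_mem _ ?_ _
  cases b
  exacts [inv_mem hr', hr']

theorem mem_normalClosure_iff_exists_conjWord {R : Set (List (α × Bool))} {x : FreeGroup α} :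
    x ∈ Subgroup.normalClosure (mk '' R) ↔
      ∃ L : List (List (α × Bool) × List (α × Bool) × Bool),
        (∀ e ∈ L, e.2.1 ∈ R) ∧ mk (L.flatMap conjWord) = x := by
  constructor
  · classical
    intro hx
    induction hx using Subgroup.closure_induction'' with
    | mem x hx =>
      obtain ⟨_, ⟨r, hr, rfl⟩, hconj⟩ := Group.mem_conjugatesOfSet_iff.1 hx
      obtain ⟨c, rfl⟩ := isConj_iff.1 hconj
      exact ⟨[(c.toWord, r, true)], by simpa using hr, by
        rw [List.flatMap_singleton, mk_conjWord, mk_toWord, cond_true]⟩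
    | inv_mem x hx =>
      obtain ⟨_, ⟨r, hr, rfl⟩, hconj⟩ := Group.mem_conjugatesOfSet_iff.1 hx
      obtain ⟨c, rfl⟩ := isConj_iff.1 hconj
      exact ⟨[(c.toWord, r, false)], by simpa using hr, by
        rw [List.flatMap_singleton, mk_conjWord, mk_toWord, cond_false]; group⟩
    | one => exact ⟨[], by simp, rfl⟩
    | mul x y _ _ hx hy =>
      obtain ⟨Lx, hLx, rfl⟩ := hx
      obtain ⟨Ly, hLy, rfl⟩ := hy
      exact ⟨Lx ++ Ly, List.forall_mem_append.2 ⟨hLx, hLy⟩, by simp [mul_mk]⟩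
  · rintro ⟨L, hL, rfl⟩
    induction L with
    | nil => exact one_mem _
    | cons e L ih =>
      rw [List.forall_mem_cons] at hL
      rw [List.flatMap_cons, ← mul_mk]
      exact mul_mem (mk_conjWord_mem_normalClosure hL.1 _) (ih hL.2)

theorem mk_eq_mk_iff_reduce [DecidableEq α] {L₁ L₂ : List (α × Bool)} :
    mk L₁ = mk L₂ ↔ reduce L₁ = reduce L₂ := by
  rw [← toWord_inj, toWord_mk, toWord_mk]

theorem reduce_eq_foldr [DecidableEq α] (L : List (α × Bool)) :
    reduce L = L.foldr (fun x l => if l.head? = some (x.1, !x.2) then l.tail else x :: l) [] := by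
  induction L with
  | nil => rfl
  | cons x L ih =>
    rw [reduce.cons, ih, List.foldr_cons]
    cases L.foldr (fun x l => if l.head? = some (x.1, !x.2) then l.tail else x :: l) [] with
    | nil => rfl
    | cons hd tl =>
      obtain ⟨a, b⟩ := x
      obtain ⟨a', b'⟩ := hd
      cases b <;> cases b' <;> simp [eq_comm]

section Primrec

variable [Primcodable α]

theorem primrec_invRev : Primrec (invRev : List (α × Bool) → List (α × Bool)) :=
  Primrec.list_reverse.comp (Primrec.list_map Primrec.id
    (Primrec.fst.comp Primrec.snd |>.pair
      ((Primrec.dom_bool not).comp (Primrec.snd.comp Primrec.snd))).to₂)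

theorem primrec_conjWord :
    Primrec (conjWord : List (α × Bool) × List (α × Bool) × Bool → List (α × Bool)) :=
  Primrec.list_append.comp
    (Primrec.list_append.comp Primrec.fst (Primrec.cond (Primrec.snd.comp Primrec.snd)
      (Primrec.fst.comp Primrec.snd) (primrec_invRev.comp (Primrec.fst.comp Primrec.snd))))
    (primrec_invRev.comp Primrec.fst)

theorem primrec_reduce [DecidableEq α] :
    Primrec (reduce : List (α × Bool) → List (α × Bool)) := by
  have hstep : Primrec₂ fun (x : α × Bool) (l : List (α × Bool)) =>
      if l.head? = some (x.1, !x.2) then l.tail else x :: l :=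
    Primrec.ite (PrimrecRel.comp Primrec.eq (Primrec.list_head?.comp Primrec.snd)
        (Primrec.option_some.comp (Primrec.fst.comp Primrec.fst |>.pair
          ((Primrec.dom_bool not).comp (Primrec.snd.comp Primrec.fst)))))
      (Primrec.list_tail.comp Primrec.snd) (Primrec.list_cons.comp Primrec.fst Primrec.snd)
  exact (Primrec.list_foldr Primrec.id (Primrec.const [])
    (hstep.comp (Primrec.fst.comp Primrec.snd) (Primrec.snd.comp Primrec.snd)).to₂).of_eq
    fun L => (reduce_eq_foldr L).symm

end Primrec

end FreeGroup

open FreeGroup in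
theorem wordProblem_re (R : Set (List (ℕ × Bool))) (hR : REPredicate (· ∈ R)) :
    REPredicate (fun w : List (ℕ × Bool) =>
      PresentedGroup.mk (FreeGroup.mk '' R) (FreeGroup.mk w) = 1) := by
  have hrelators : REPred fun L : List (List (ℕ × Bool) × List (ℕ × Bool) × Bool) =>
      ∀ e ∈ L, e.2.1 ∈ R :=
    (REPred.comp (REPred.forall_mem_list hR) (Primrec.list_map Primrec.id
      (Primrec.fst.comp (Primrec.snd.comp Primrec.snd)).to₂).to_comp).of_eq
      fun L => List.forall_mem_map
  have hproduct : ComputablePred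
      fun p : List (ℕ × Bool) × List (List (ℕ × Bool) × List (ℕ × Bool) × Bool) =>
        reduce (p.2.flatMap conjWord) = reduce p.1 :=
    (PrimrecRel.comp Primrec.eq (primrec_reduce.comp (Primrec.list_flatMap Primrec.snd
      (primrec_conjWord.comp Primrec.snd).to₂)) (primrec_reduce.comp Primrec.fst)).computablePred
  refine (REPred.and (REPred.comp hrelators Computable.snd) hproduct.to_re).exists.of_eq
    fun w => ?_
  rw [PresentedGroup.mk_eq_one_iff, mem_normalClosure_iff_exists_conjWord]
  simp only [mk_eq_mk_iff_reduce]
end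

section
/- Let A ⊆ ℕ be a set with a ∈ A for some a ≥ 2, and let W ⊆ ℕ. Consider the group G presented on generators x_i (i ∈ ℕ) with relators {x_i^a | i ∈ ℕ} ∪ {x_j | j ∈ W}, i.e. G := PresentedGroup R where R ⊆ FreeGroup ℕ is the set {(FreeGroup.of i)^a | i ∈ ℕ} ∪ {FreeGroup.of j | j ∈ W}. Then G is A-torsion-free if and only if W = ℕ. -/
/-- A predicate on a primcodable type is recursively enumerable if it is the domain of a
partial computable function. -/
def REPred' {α : Type*} [Primcodable α] (p : α → Prop) : Prop :=
  Partrec (fun a => Part.assert (p a) (fun _ => Part.some ()))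

/-! The group `⟨x_i (i ∈ ℕ) | x_i ^ a, x_j (j ∈ W)⟩` kills every generator when `W = ℕ`, while
for `j ∉ W` the homomorphism to `ℤ/a` sending `x_j ↦ 1` and all other generators to `0` shows
that `x_j` is a nontrivial element of order dividing `a`, hence nontrivial `A`-torsion. -/

section TorsionFree

variable {X : Set ℕ} {G : Type*} [Group G]

lemma IsXTorsionFree.eq_one_of_pow_eq_one (h : IsXTorsionFree X G) {g : G} {n : ℕ}
    (hn : n ∈ X) (hg : g ^ n = 1) : g = 1 := by
  have hmem : g ∈ xTorsion X G := ⟨n, hn, hg⟩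
  rwa [h] at hmem

lemma isXTorsionFree_of_subsingleton [Subsingleton G] (hX : X.Nonempty) :
    IsXTorsionFree X G := by
  obtain ⟨n, hn⟩ := hX
  ext g
  rw [Subsingleton.elim g 1]
  exact iff_of_true ⟨n, hn, one_pow n⟩ rfl

end TorsionFree

namespace PresentedGroup

variable {α : Type*} {rels : Set (FreeGroup α)}

lemma of_pow_eq_one_of_mem {x : α} {n : ℕ} (h : FreeGroup.of x ^ n ∈ rels) :
    (of x : PresentedGroup rels) ^ n = 1 := by
  rw [of, ← map_pow]
  exact one_of_mem h

lemma subsingleton_of_forall_of_mem (h : ∀ x, FreeGroup.of x ∈ rels) :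
    Subsingleton (PresentedGroup rels) := by
  have hbot : ∀ g : PresentedGroup rels, g ∈ (⊥ : Subgroup _) :=
    generated_by rels ⊥ fun x => Subgroup.mem_bot.mpr (one_of_mem (h x))
  exact subsingleton_of_forall_eq 1 fun g => Subgroup.mem_bot.mp (hbot g)

def powerRelators (a : ℕ) (W : Set α) : Set (FreeGroup α) :=
  (Set.range fun i : α => FreeGroup.of i ^ a) ∪ (FreeGroup.of '' W)

lemma of_ne_one_of_notMem {a : ℕ} (ha : 2 ≤ a) {W : Set α} {j : α}
    (hj : j ∉ W) : (of j : PresentedGroup (powerRelators a W)) ≠ 1 := by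
  classical
  have : Fact (1 < a) := ⟨ha⟩
  let f : α → Multiplicative (ZMod a) := Pi.mulSingle j (Multiplicative.ofAdd 1)
  have hrels : ∀ r ∈ powerRelators a W, FreeGroup.lift f r = 1 := by
    rintro r (⟨i, rfl⟩ | ⟨k, hk, rfl⟩)
    · rw [map_pow, ← ofAdd_toAdd (FreeGroup.lift f _), ← ofAdd_nsmul,
        ZModModule.char_nsmul_eq_zero, ofAdd_zero]
    · rw [FreeGroup.lift_apply_of]
      exact Pi.mulSingle_eq_of_ne (fun hkj : k = j => hj (hkj ▸ hk)) _
  intro h1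
  have hf : f j = 1 := by rw [← toGroup.of hrels, h1, map_one]
  simp [f] at hf

end PresentedGroup

open PresentedGroup

theorem xTorsionFree_iff_W_univ (A : Set ℕ) (a : ℕ) (ha : a ∈ A) (ha2 : 2 ≤ a)
    (W : Set ℕ) :
    IsXTorsionFree A (PresentedGroup
      ((Set.range fun i : ℕ => FreeGroup.of i ^ a) ∪ (FreeGroup.of '' W))) ↔
    W = Set.univ := by
  change IsXTorsionFree A (PresentedGroup (powerRelators a W)) ↔ W = Set.univ
  constructor
  · intro h
    by_contra hW
    obtain ⟨j, hj⟩ := (Set.ne_univ_iff_exists_notMem W).mp hW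
    have hja : (of j : PresentedGroup (powerRelators a W)) ^ a = 1 :=
      of_pow_eq_one_of_mem (Or.inl ⟨j, rfl⟩)
    exact of_ne_one_of_notMem ha2 hj (h.eq_one_of_pow_eq_one ha hja)
  · rintro rfl
    have := subsingleton_of_forall_of_mem (rels := powerRelators a (Set.univ : Set ℕ))
      fun i => Or.inr ⟨i, trivial, rfl⟩
    exact isXTorsionFree_of_subsingleton ⟨a, ha⟩
end
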